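/- Let n = 2d + 1 be an odd positive integer. In the symmetric group S_n, let w₀ be the permutation i ↦ n + 1 − i and let w be the cycle (1 2 … d+1), i.e. w(i) = i + 1 for 1 ≤ i ≤ d, w(d+1) = 1, and w(i) = i for i > d + 1. Then the set {x ∈ S_n : x = w · (w₀ x w₀) · w^{−1}} has exactly n elements. -/
import Mathlib

open Equiv Equiv.Perm

private lemma aux_centralizer_card {n : ℕ} (g : Perm (Fin n))
    (hc : g.IsCycle) (hs : g.support = Finset.univ) :
    Set.ncard {x : Perm (Fin n) | Commute x g} = n := by
  have hset : {x : Perm (Fin n) | Commute x g} = (Subgroup.zpowers g : Set (Perm (Fin n))) := by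
    ext x
    simp only [Set.mem_setOf_eq, SetLike.mem_coe]
    constructor
    · intro hx
      obtain ⟨hc', hmem⟩ := hc.commute_iff.mp hx
      have : ofSubtype (x.subtypePerm hc') = x := by
        apply ofSubtype_subtypePerm
        intro a _
        rw [← Finset.mem_coe, hs]
        simp
      rwa [this] at hmem
    · rintro ⟨k, rfl⟩
      exact (Commute.refl g).zpow_left k
  rw [hset]
  have h2 : Set.ncard (Subgroup.zpowers g : Set (Perm (Fin n)))
      = Nat.card (Subgroup.zpowers g) := by
    rw [← Nat.card_coe_set_eq, SetLike.coe_sort_coe]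
  rw [h2, Nat.card_zpowers, hc.orderOf, hs, Finset.card_univ, Fintype.card_fin]

/-- Let `n = 2d+1` be odd. In `S_n` (permutations of `{0, …, n−1}`, i.e. of
`{1, …, n}` shifted by one), let `w₀` be `i ↦ n−1−i` (corresponding to `i ↦ n+1−i` on
`{1, …, n}`) and `w` the cycle `(1 2 … d+1)`, i.e. `w(i) = i+1` for `i < d`, `w(d) = 0`, and
`w(i) = i` for `i > d`. Then `{x ∈ S_n : x = w·(w₀ x w₀)·w⁻¹}` has exactly `n` elements. -/
theorem stmt7 (n d : ℕ) (hn : n = 2 * d + 1)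
    (w₀ : Equiv.Perm (Fin n)) (hw₀ : ∀ i : Fin n, ((w₀ i : ℕ) = n - 1 - (i : ℕ)))
    (w : Equiv.Perm (Fin n))
    (hw : ∀ i : Fin n, ((w i : ℕ) =
      if (i : ℕ) < d then (i : ℕ) + 1 else if (i : ℕ) = d then 0 else (i : ℕ))) :
    Set.ncard {x : Equiv.Perm (Fin n) | x = w * (w₀ * x * w₀) * w⁻¹} = n := by
  subst hn
  -- degenerate case d = 0
  rcases Nat.eq_zero_or_pos d with hd0 | hd
  · subst hd0
    have h1 : {x : Equiv.Perm (Fin (2*0+1)) | x = w * (w₀ * x * w₀) * w⁻¹} = Set.univ := by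
      ext x
      simp only [Set.mem_setOf_eq, Set.mem_univ, iff_true]
      ext i
      have := ((w * (w₀ * x * w₀) * w⁻¹) i).isLt
      have := (x i).isLt
      omega
    rw [h1, Set.ncard_univ, Nat.card_eq_fintype_card]
    simp [Fintype.card_perm]
  have hnpos : 0 < 2 * d + 1 := by omega
  -- w₀ is an involution
  have hw₀sq : w₀ * w₀ = 1 := by
    ext i
    have h1 := hw₀ i
    have h2 := hw₀ (w₀ i)
    have hi := i.isLt
    have hwi := (w₀ i).isLt
    simp only [Perm.mul_apply, Perm.one_apply]
    omega
  have hw₀inv : w₀⁻¹ = w₀ := inv_eq_of_mul_eq_one_right hw₀sq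
  set g := w * w₀ with hg
  -- the set is the centralizer of g
  have hsetc : {x : Equiv.Perm (Fin (2*d+1)) | x = w * (w₀ * x * w₀) * w⁻¹} =
      {x : Equiv.Perm (Fin (2*d+1)) | Commute x g} := by
    ext x
    have hre : w * (w₀ * x * w₀) * w⁻¹ = g * x * g⁻¹ := by
      rw [hg, mul_inv_rev, hw₀inv]
      group
    simp only [Set.mem_setOf_eq]
    rw [hre, eq_mul_inv_iff_mul_eq]
    exact Iff.rfl
  rw [hsetc]
  -- explicit formula for g
  have hgval : ∀ i : Fin (2*d+1), (g i : ℕ) =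
      if (i : ℕ) < d then 2 * d - (i : ℕ) else if (i : ℕ) = d then 0 else 2*d+1 - (i : ℕ) := by
    intro i
    have hi := i.isLt
    have h1 := hw₀ i
    have h2 := hw (w₀ i)
    simp only [hg, Perm.mul_apply]
    rw [h2, h1]
    rcases lt_trichotomy (i : ℕ) d with h | h | h
    · rw [if_pos h, if_neg (by omega), if_neg (by omega)]
      omega
    · rw [if_neg (by omega), if_pos (by omega), if_neg (by omega), if_pos (by omega)]
    · rw [if_pos (by omega), if_neg (by omega), if_neg (by omega)]
      omega
  -- key orbit computation
  have key : ∀ k : ℕ, k ≤ d → ((g ^ (2 * k)) ⟨0, hnpos⟩ : ℕ) = k ∧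
      (k < d → ((g ^ (2 * k + 1)) ⟨0, hnpos⟩ : ℕ) = 2 * d - k) := by
    intro k
    induction k with
    | zero =>
      intro _
      constructor
      · simp
      · intro h0d
        have h1 : (g ^ (2 * 0 + 1)) ⟨0, hnpos⟩ = g ⟨0, hnpos⟩ := by norm_num
        rw [h1, hgval ⟨0, hnpos⟩]
        rw [if_pos (by simpa using h0d)]
    | succ k ih =>
      intro hk1
      obtain ⟨ih1, ih2⟩ := ih (by omega)
      have hodd := ih2 (by omega)
      have step1 : (g ^ (2 * (k + 1))) ⟨0, hnpos⟩ = g ((g ^ (2 * k + 1)) ⟨0, hnpos⟩) := by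
        rw [show 2 * (k + 1) = (2 * k + 1) + 1 by ring, pow_succ', Perm.mul_apply]
      have hval1 : ((g ^ (2 * (k + 1))) ⟨0, hnpos⟩ : ℕ) = k + 1 := by
        rw [step1, hgval]
        rw [hodd, if_neg (by omega), if_neg (by omega)]
        omega
      refine ⟨hval1, fun hlt => ?_⟩
      have step2 : (g ^ (2 * (k + 1) + 1)) ⟨0, hnpos⟩ = g ((g ^ (2 * (k + 1))) ⟨0, hnpos⟩) := by
        rw [pow_succ', Perm.mul_apply]
      rw [step2, hgval, hval1, if_pos hlt]
  -- every point is in the orbit of 0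
  have horbit : ∀ b : Fin (2*d+1), ∃ m : ℕ, (g ^ m) ⟨0, hnpos⟩ = b := by
    intro b
    have hb := b.isLt
    rcases le_or_gt (b : ℕ) d with h | h
    · exact ⟨2 * b, Fin.ext ((key b h).1)⟩
    · refine ⟨2 * (2 * d - (b : ℕ)) + 1, Fin.ext ?_⟩
      rw [(key _ (by omega)).2 (by omega)]
      omega
  -- g has no fixed points
  have hnofix : ∀ b : Fin (2*d+1), g b ≠ b := by
    intro b hb
    have hb2 := b.isLt
    have hv := hgval b
    rw [hb] at hv
    rcases lt_trichotomy (b : ℕ) d with h | h | h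
    · rw [if_pos h] at hv; omega
    · rw [if_neg (by omega), if_pos h] at hv; omega
    · rw [if_neg (by omega), if_neg (by omega)] at hv; omega
  -- g is a cycle
  have hcyc : g.IsCycle := by
    refine ⟨⟨0, hnpos⟩, hnofix _, fun b _ => ?_⟩
    obtain ⟨m, hm⟩ := horbit b
    exact ⟨(m : ℤ), by rw [zpow_natCast]; exact hm⟩
  have hsupp : g.support = Finset.univ := by
    ext b
    simp [Perm.mem_support, hnofix b]
  rw [aux_centralizer_card g hcyc hsupp]
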